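/- Fix n ≥ 3 and let Mn be the lattice with bottom ⊥, top ⊤, and n pairwise incomparable middle elements m₁,…,mₙ. (i) In Mn, for all x₁,…,x_{n+1}: if ⋀_{i=2}^{n+1} (x₁ ∨ xᵢ) = ⊤ then x₁ ∨ ⋁_{1≤i<j≤n+1} (xᵢ ∧ xⱼ) = ⊤. (ii) In M(n+1) (the analogous lattice with n+1 middle elements), there exist x₁,…,x_{n+1} with ⋀_{i=2}^{n+1} (x₁ ∨ xᵢ) = ⊤ but x₁ ∨ ⋁_{1≤i<j≤n+1} (xᵢ ∧ xⱼ) ≠ ⊤. -/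
import Mathlib


/-- `IsMnLattice n L m` says that the bounded lattice `L` is the lattice `Mn`
with the `n` pairwise incomparable middle elements `m 0, …, m (n-1)`:
every element is `⊥`, `⊤` or some `m i`, the `m i` are pairwise distinct,
differ from `⊥` and `⊤`, and any two distinct middle elements join to `⊤`
and meet to `⊥`. -/
structure IsMnLattice (n : ℕ) (L : Type*) [Lattice L] [BoundedOrder L]
    (m : Fin n → L) : Prop where
  inj : Function.Injective m
  cover : ∀ x : L, x = ⊥ ∨ x = ⊤ ∨ ∃ i, x = m i
  ne_bot : ∀ i, m i ≠ ⊥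
  ne_top : ∀ i, m i ≠ ⊤
  sup_eq : ∀ i j, i ≠ j → m i ⊔ m j = ⊤
  inf_eq : ∀ i j, i ≠ j → m i ⊓ m j = ⊥

theorem stmt_18 (n : ℕ) (hn : 3 ≤ n)
    -- (i) the lattice Mn
    {L : Type*} [Lattice L] [BoundedOrder L] (m : Fin n → L)
    (hL : IsMnLattice n L m)
    -- (ii) the lattice M(n+1)
    {L' : Type*} [Lattice L'] [BoundedOrder L'] (m' : Fin (n + 1) → L')
    (hL' : IsMnLattice (n + 1) L' m') :
    (∀ x : Fin (n + 1) → L,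
        (Finset.univ.erase (0 : Fin (n + 1))).inf (fun i => x 0 ⊔ x i) = ⊤ →
        x 0 ⊔ ((Finset.univ.filter
            (fun p : Fin (n + 1) × Fin (n + 1) => p.1 < p.2)).sup
            (fun p => x p.1 ⊓ x p.2)) = ⊤) ∧
    (∃ x : Fin (n + 1) → L',
        (Finset.univ.erase (0 : Fin (n + 1))).inf (fun i => x 0 ⊔ x i) = ⊤ ∧
        x 0 ⊔ ((Finset.univ.filter
            (fun p : Fin (n + 1) × Fin (n + 1) => p.1 < p.2)).sup
            (fun p => x p.1 ⊓ x p.2)) ≠ ⊤) := by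
  constructor
  · intro x h
    set S := (Finset.univ.filter
        (fun p : Fin (n + 1) × Fin (n + 1) => p.1 < p.2)).sup
        (fun p => x p.1 ⊓ x p.2) with hS
    -- any pairwise meet is below S
    have pair_le : ∀ i j : Fin (n + 1), i ≠ j → x i ⊓ x j ≤ S := by
      intro i j hij
      rcases hij.lt_or_gt with hlt | hlt
      · exact Finset.le_sup (f := fun p : Fin (n+1) × Fin (n+1) => x p.1 ⊓ x p.2)
          (b := (i, j)) (by simp [hlt])
      · rw [inf_comm]
        exact Finset.le_sup (f := fun p : Fin (n+1) × Fin (n+1) => x p.1 ⊓ x p.2)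
          (b := (j, i)) (by simp [hlt])
    -- each hypothesis term equals ⊤
    have hsup : ∀ i : Fin (n + 1), i ≠ 0 → x 0 ⊔ x i = ⊤ := by
      intro i hi
      have hmem : i ∈ Finset.univ.erase (0 : Fin (n + 1)) := by simp [hi]
      have := Finset.inf_le (f := fun i => x 0 ⊔ x i) hmem
      rw [h] at this
      exact top_le_iff.mp this
    -- some convenient indices
    have h1 : ((⟨1, by omega⟩ : Fin (n+1)) : Fin (n+1)) ≠ 0 := by
      simp [Fin.ext_iff]
    have h2 : ((⟨2, by omega⟩ : Fin (n+1)) : Fin (n+1)) ≠ 0 := by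
      simp [Fin.ext_iff]
    have h3 : ((⟨3, by omega⟩ : Fin (n+1)) : Fin (n+1)) ≠ 0 := by
      simp [Fin.ext_iff]
    have h12 : (⟨1, by omega⟩ : Fin (n+1)) ≠ (⟨2, by omega⟩ : Fin (n+1)) := by
      simp [Fin.ext_iff]
    have h13 : (⟨1, by omega⟩ : Fin (n+1)) ≠ (⟨3, by omega⟩ : Fin (n+1)) := by
      simp [Fin.ext_iff]
    have h23 : (⟨2, by omega⟩ : Fin (n+1)) ≠ (⟨3, by omega⟩ : Fin (n+1)) := by
      simp [Fin.ext_iff]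
    rcases hL.cover (x 0) with h0 | h0 | ⟨k, h0⟩
    · -- x 0 = ⊥ : then every x i = ⊤ for i ≠ 0
      have hxt : ∀ i : Fin (n+1), i ≠ 0 → x i = ⊤ := by
        intro i hi
        have := hsup i hi
        rwa [h0, bot_sup_eq] at this
      have : (⊤ : L) ≤ S := by
        have := pair_le _ _ h12
        rwa [hxt _ h1, hxt _ h2, top_inf_eq] at this
      exact top_le_iff.mp (le_trans this le_sup_right)
    · simp [h0]
    · -- x 0 = m k
      have hx : ∀ i : Fin (n+1), i ≠ 0 → x i = ⊤ ∨ ∃ l, l ≠ k ∧ x i = m l := by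
        intro i hi
        rcases hL.cover (x i) with hxi | hxi | ⟨l, hxi⟩
        · exfalso
          have := hsup i hi
          rw [h0, hxi, sup_bot_eq] at this
          exact hL.ne_top k this
        · exact Or.inl hxi
        · refine Or.inr ⟨l, ?_, hxi⟩
          rintro rfl
          have := hsup i hi
          rw [h0, hxi, sup_idem] at this
          exact hL.ne_top l this
      by_cases hcol : ∃ i j : Fin (n+1), i ≠ 0 ∧ j ≠ 0 ∧ i ≠ j ∧ x i = x j
      · obtain ⟨i, j, hi, hj, hij, hxij⟩ := hcol
        rcases hx i hi with hxi | ⟨l, hlk, hxi⟩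
        · have : (⊤ : L) ≤ S := by
            have := pair_le _ _ hij
            rwa [hxi, ← hxij, hxi, top_inf_eq] at this
          exact top_le_iff.mp (le_trans this le_sup_right)
        · have hml : m l ≤ S := by
            have := pair_le _ _ hij
            rwa [hxi, ← hxij, hxi, inf_idem] at this
          have : (⊤ : L) ≤ x 0 ⊔ S := by
            rw [← hL.sup_eq k l (Ne.symm hlk), h0]
            exact sup_le_sup le_rfl hml
          exact top_le_iff.mp this
      · push_neg at hcol
        by_cases htop : ∃ t : Fin (n+1), t ≠ 0 ∧ x t = ⊤
        · obtain ⟨t, ht0, hxt⟩ := htop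
          -- pick two distinct nonzero indices different from t
          obtain ⟨i₁, i₂, hi₁0, hi₂0, hi₁₂, hi₁t, hi₂t⟩ :
              ∃ i₁ i₂ : Fin (n+1), i₁ ≠ 0 ∧ i₂ ≠ 0 ∧ i₁ ≠ i₂ ∧ i₁ ≠ t ∧ i₂ ≠ t := by
            by_cases e1 : t = (⟨1, by omega⟩ : Fin (n+1))
            · exact ⟨⟨2, by omega⟩, ⟨3, by omega⟩, h2, h3, h23,
                by rw [e1]; exact Ne.symm h12, by rw [e1]; exact Ne.symm h13⟩
            · by_cases e2 : t = (⟨2, by omega⟩ : Fin (n+1))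
              · exact ⟨⟨1, by omega⟩, ⟨3, by omega⟩, h1, h3, h13,
                  by rw [e2]; exact h12, by rw [e2]; exact Ne.symm h23⟩
              · exact ⟨⟨1, by omega⟩, ⟨2, by omega⟩, h1, h2, h12,
                  fun hh => e1 hh.symm, fun hh => e2 hh.symm⟩
          have hmi : ∀ i : Fin (n+1), i ≠ 0 → i ≠ t → ∃ l, l ≠ k ∧ x i = m l := by
            intro i hi hit
            rcases hx i hi with hxi | hxi
            · exact absurd (hxi.trans hxt.symm) (hcol i t hi ht0 hit)
            · exact hxi
          obtain ⟨l₁, hl₁k, hxl₁⟩ := hmi i₁ hi₁0 hi₁t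
          obtain ⟨l₂, hl₂k, hxl₂⟩ := hmi i₂ hi₂0 hi₂t
          have hl₁₂ : l₁ ≠ l₂ := by
            intro hh
            exact hcol i₁ i₂ hi₁0 hi₂0 hi₁₂ (by rw [hxl₁, hxl₂, hh])
          have hm1 : m l₁ ≤ S := by
            have := pair_le t i₁ (Ne.symm hi₁t)
            rwa [hxt, hxl₁, top_inf_eq] at this
          have hm2 : m l₂ ≤ S := by
            have := pair_le t i₂ (Ne.symm hi₂t)
            rwa [hxt, hxl₂, top_inf_eq] at this
          have : (⊤ : L) ≤ S := by
            rw [← hL.sup_eq l₁ l₂ hl₁₂]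
            exact sup_le hm1 hm2
          exact top_le_iff.mp (le_trans this le_sup_right)
        · -- no ⊤ among nonzero indices: pigeonhole gives a collision, contradiction
          exfalso
          push_neg at htop
          have hmi : ∀ i : Fin (n+1), ∃ l : Fin n, i ≠ 0 → (l ≠ k ∧ x i = m l) := by
            intro i
            by_cases hi : i = 0
            · exact ⟨k, fun hh => absurd hi hh⟩
            · rcases hx i hi with hxi | ⟨l, hl⟩
              · exact absurd hxi (htop i hi)
              · exact ⟨l, fun _ => hl⟩
          choose g hg using hmi
          have hmaps : ∀ i ∈ Finset.univ.erase (0 : Fin (n+1)),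
              g i ∈ Finset.univ.erase k := by
            intro i hi
            simp only [Finset.mem_erase, Finset.mem_univ, and_true] at hi ⊢
            exact (hg i hi).1
          have hcard : (Finset.univ.erase k).card <
              (Finset.univ.erase (0 : Fin (n+1))).card := by
            rw [Finset.card_erase_of_mem (Finset.mem_univ _),
              Finset.card_erase_of_mem (Finset.mem_univ _)]
            simp only [Finset.card_univ, Fintype.card_fin]
            omega
          obtain ⟨i, hi, j, hj, hij, hgij⟩ :=
            Finset.exists_ne_map_eq_of_card_lt_of_maps_to hcard hmaps
          simp only [Finset.mem_erase, Finset.mem_univ, and_true] at hi hj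
          exact hcol i j hi hj hij
            (by rw [(hg i hi).2, (hg j hj).2, hgij])
  · -- (ii): take x = m'
    refine ⟨m', ?_, ?_⟩
    · rw [Finset.inf_eq_top_iff]
      intro i hi
      simp only [Finset.mem_erase, Finset.mem_univ, and_true] at hi
      exact hL'.sup_eq 0 i (Ne.symm hi)
    · have hsupbot : (Finset.univ.filter
          (fun p : Fin (n + 1) × Fin (n + 1) => p.1 < p.2)).sup
          (fun p => m' p.1 ⊓ m' p.2) = ⊥ := by
        rw [← le_bot_iff]
        apply Finset.sup_le
        intro p hp
        simp only [Finset.mem_filter, Finset.mem_univ, true_and] at hp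
        rw [hL'.inf_eq p.1 p.2 (ne_of_lt hp)]
      rw [hsupbot, sup_bot_eq]
      exact hL'.ne_top 0
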